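/- If {φ_k} is a sequence of positive real-valued C∞ functions on ∂Ω with φ_k → φ uniformly on ∂Ω as k → ∞, then S_{φ_k}(z,w) → S_φ(z,w) locally uniformly on Ω × Ω. -/

import Mathlib

open MeasureTheory Filter Topology Complex Set

noncomputable section

/-- A bounded `n`-connected planar domain `Ω` with `C^∞`-smooth boundary consisting of the
`n` closed curves `γ i`, together with the induced arc length measure `μ` on `∂Ω` and the
complex unit tangent function `T` (so that `dz = T ds`). -/
structure SmoothDomain (n : ℕ) where
  Ω : Set ℂ
  isOpen : IsOpen Ω
  bounded : Bornology.IsBounded Ω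
  connected : IsConnected Ω
  γ : Fin n → ℝ → ℂ
  γ_smooth : ∀ i, ContDiff ℝ (⊤ : ℕ∞) (γ i)
  γ_periodic : ∀ i, Function.Periodic (γ i) 1
  γ_regular : ∀ i t, deriv (γ i) t ≠ 0
  γ_inj : ∀ i, Set.InjOn (γ i) (Set.Ico (0 : ℝ) 1)
  γ_disjoint : ∀ i j, i ≠ j → Disjoint (Set.range (γ i)) (Set.range (γ j))
  γ_cover : frontier Ω = ⋃ i, Set.range (γ i)
  μ : Measure ℂ
  μ_def : μ = ∑ i, Measure.map (γ i)
      ((volume.restrict (Set.Ico (0 : ℝ) 1)).withDensity fun t => ENNReal.ofReal ‖deriv (γ i) t‖)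
  T : ℂ → ℂ
  T_def : ∀ i t, T (γ i t) = deriv (γ i) t / (‖deriv (γ i) t‖ : ℂ)

namespace SmoothDomain

variable {n : ℕ} (D : SmoothDomain n)

/-- `C^∞(∂Ω)`: functions admitting a `C^∞` extension. -/
def SmoothOnBdry (u : ℂ → ℂ) : Prop :=
  ∃ U : ℂ → ℂ, ContDiff ℝ (⊤ : ℕ∞) U ∧ Set.EqOn u U (frontier D.Ω)

/-- positive real-valued `C^∞` weights on `∂Ω`. -/
def SmoothWeight (φ : ℂ → ℝ) : Prop :=
  (∀ z ∈ frontier D.Ω, 0 < φ z) ∧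
  ∃ Φ : ℂ → ℝ, ContDiff ℝ (⊤ : ℕ∞) Φ ∧ Set.EqOn φ Φ (frontier D.Ω)

/-- `A^∞(Ω)`: holomorphic on `Ω` and `C^∞` up to the boundary. -/
def AInf (f : ℂ → ℂ) : Prop :=
  DifferentiableOn ℂ f D.Ω ∧
  ∃ F : ℂ → ℂ, ContDiff ℝ (⊤ : ℕ∞) F ∧ Set.EqOn f F (closure D.Ω)

/-- the inner product of `L²_φ(∂Ω)`. -/
def ip (φ : ℂ → ℝ) (u v : ℂ → ℂ) : ℂ :=
  ∫ z, u z * (starRingEnd ℂ) (v z) * (φ z : ℂ) ∂D.μ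

/-- the Cauchy transform, written against arc length measure using `dz = T ds`. -/
def cauchy (u : ℂ → ℂ) (z : ℂ) : ℂ :=
  (2 * (Real.pi : ℂ) * Complex.I)⁻¹ * ∫ ζ, u ζ * D.T ζ / (ζ - z) ∂D.μ

/-- the Cauchy kernel `C_a`. -/
def ck (a z : ℂ) : ℂ :=
  (starRingEnd ℂ) ((2 * (Real.pi : ℂ) * Complex.I)⁻¹ * D.T z / (z - a))

/-- The Hardy space `H²(∂Ω)`: the `L²(∂Ω)`-closure of `A^∞(Ω)`, whose elements are
identified with holomorphic functions on `Ω` recovered by the Cauchy transform. -/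
def Hardy (u : ℂ → ℂ) : Prop :=
  MemLp u 2 D.μ ∧ DifferentiableOn ℂ u D.Ω ∧
  (∀ a ∈ D.Ω, u a = D.cauchy u a) ∧
  ∃ f : ℕ → ℂ → ℂ, (∀ k, D.AInf (f k)) ∧
    Tendsto (fun k => ∫ z, ‖f k z - u z‖ ^ 2 ∂D.μ) atTop (nhds 0)

/-- `P` is the weighted Szegő projection: the orthogonal projection of `L²_φ(∂Ω)`
onto `H²(∂Ω)`. -/
def IsSzegoProj (φ : ℂ → ℝ) (P : (ℂ → ℂ) → ℂ → ℂ) : Prop :=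
  ∀ u : ℂ → ℂ, MemLp u 2 D.μ →
    D.Hardy (P u) ∧ ∀ h : ℂ → ℂ, D.Hardy h → D.ip φ (fun z => u z - P u z) h = 0

/-- `S` is the weighted Szegő kernel of weight `φ`: `S(·,a)` is the reproducing element
of `H²(∂Ω)` for evaluation at `a` with respect to `⟨·,·⟩_φ`. -/
def IsSzegoKernel (φ : ℂ → ℝ) (S : ℂ → ℂ → ℂ) : Prop :=
  ∀ a ∈ D.Ω, D.Hardy (fun z => S z a) ∧
    ∀ h : ℂ → ℂ, D.Hardy h → h a = D.ip φ h (fun z => S z a)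

/-- the Cauchy transform as an operator `C^∞(∂Ω) → A^∞(Ω)`, recording also the
boundary values of `Cu` (the values of the `A^∞` extension). -/
def IsCauchyOp (C : (ℂ → ℂ) → ℂ → ℂ) : Prop :=
  ∀ u, D.SmoothOnBdry u → D.AInf (C u) ∧ ∀ z ∈ D.Ω, C u z = D.cauchy u z

/-- the `L²_φ`-adjoint `C^*_φ v = v - T̄ φ⁻¹ conj (C (conj (v φ) T̄))`. -/
def cstar (φ : ℂ → ℝ) (C : (ℂ → ℂ) → ℂ → ℂ) (v : ℂ → ℂ) (z : ℂ) : ℂ :=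
  v z - (starRingEnd ℂ) (D.T z) * ((φ z : ℂ))⁻¹ *
    (starRingEnd ℂ) (C (fun ξ => (starRingEnd ℂ) (v ξ * (φ ξ : ℂ)) * (starRingEnd ℂ) (D.T ξ)) z)

/-- weighted Garabedian data: `H a = H_a ∈ A^∞(Ω)` is the function appearing in the
orthogonal decomposition `φ⁻¹ C_a = S_φ(·,a) + φ⁻¹ conj (H_a T)` on `∂Ω`; the weighted
Garabedian kernel is then `L_φ(z,a) = 1/(2π(z-a)) - i H_a(z)`. -/
def IsGarabedian (φ : ℂ → ℝ) (S : ℂ → ℂ → ℂ) (H : ℂ → ℂ → ℂ) : Prop :=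
  ∀ a ∈ D.Ω, D.AInf (H a) ∧ ∀ z ∈ frontier D.Ω,
    ((φ z : ℂ))⁻¹ * D.ck a z = S z a + ((φ z : ℂ))⁻¹ * (starRingEnd ℂ) (H a z * D.T z)

/-- the `C^s` norm `‖u‖_s` on the boundary with respect to the parametrization. -/
def bnorm (s : ℕ) (u : ℂ → ℂ) : ℝ :=
  ⨆ i : Fin n, ⨆ m : Fin (s + 1), ⨆ t : ℝ,
    ‖iteratedDeriv (m : ℕ) (fun τ => u (D.γ i τ)) t‖

/-- membership in `C^s(∂Ω)`. -/
def MemC (s : ℕ) (u : ℂ → ℂ) : Prop :=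
  ∀ i, ContDiff ℝ (s : ℕ∞) fun t => u (D.γ i t)

/-- convergence in the `C^∞` topology on `∂Ω`: uniform convergence of all derivatives
along the boundary parametrization. -/
def TendstoCinf (φk : ℕ → ℂ → ℝ) (φ : ℂ → ℝ) : Prop :=
  ∀ i : Fin n, ∀ m : ℕ,
    TendstoUniformly (fun k => iteratedDeriv m fun t => φk k (D.γ i t))
      (iteratedDeriv m fun t => φ (D.γ i t)) atTop

/-- the boundary diagonal `Δ = {(z,z) : z ∈ ∂Ω}`. -/
def bdryDiag : Set (ℂ × ℂ) := {p : ℂ × ℂ | p.1 = p.2 ∧ p.1 ∈ frontier D.Ω}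

end SmoothDomain

/-- the Wirtinger derivative `∂/∂z`. -/
def wdz (u : ℂ → ℂ) (z : ℂ) : ℂ :=
  (1 / 2) * (deriv (fun x : ℝ => u (z + (x : ℂ))) 0 -
    Complex.I * deriv (fun y : ℝ => u (z + (y : ℂ) * Complex.I)) 0)

/-- the Wirtinger derivative `∂/∂z̄`. -/
def wdzbar (u : ℂ → ℂ) (z : ℂ) : ℂ :=
  (1 / 2) * (deriv (fun x : ℝ => u (z + (x : ℂ))) 0 +
    Complex.I * deriv (fun y : ℝ => u (z + (y : ℂ) * Complex.I)) 0)

/-- harmonic functions on a planar set. -/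
def HarmOn (u : ℂ → ℝ) (s : Set ℂ) : Prop :=
  ContDiffOn ℝ 2 u s ∧ ∀ z ∈ s,
    iteratedDeriv 2 (fun x : ℝ => u (z + (x : ℂ))) 0 +
      iteratedDeriv 2 (fun y : ℝ => u (z + (y : ℂ) * Complex.I)) 0 = 0

/-- `F' = (1/2) ∂ω/∂z` for a real-valued function `ω`. -/
def Fp (ω : ℂ → ℝ) (z : ℂ) : ℂ := (1 / 2) * wdz (fun w => ((ω w : ℝ) : ℂ)) z

namespace SmoothDomain

variable {n : ℕ} (D : SmoothDomain n)

/-- the harmonic measure functions `ω j`: harmonic on `Ω`, continuous up to the boundary,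
equal to `1` on the boundary curve `γ j` and to `0` on the other boundary curves. -/
def IsHarmonicMeasures (ω : Fin n → ℂ → ℝ) : Prop :=
  ∀ j, ContinuousOn (ω j) (closure D.Ω) ∧ HarmOn (ω j) D.Ω ∧
    (∀ z ∈ Set.range (D.γ j), ω j z = 1) ∧
    ∀ i, i ≠ j → ∀ z ∈ Set.range (D.γ i), ω j z = 0

/-- `K` is the weighted Bergman kernel of `Ω` for the weight `φ`. -/
def IsBergman (φ : ℂ → ℝ) (K : ℂ → ℂ → ℂ) : Prop :=
  ∀ w ∈ D.Ω,
    (DifferentiableOn ℂ (fun z => K z w) D.Ω ∧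
      IntegrableOn (fun z => ‖K z w‖ ^ 2 * φ z) D.Ω volume) ∧
    ∀ f : ℂ → ℂ, DifferentiableOn ℂ f D.Ω →
      IntegrableOn (fun z => ‖f z‖ ^ 2 * φ z) D.Ω volume →
      f w = ∫ z in D.Ω, f z * (starRingEnd ℂ) (K z w) * (φ z : ℂ)

/-- `G` is the classical Green's function of `Ω`. -/
def IsGreen (G : ℂ → ℂ → ℝ) : Prop :=
  ∀ a ∈ D.Ω,
    ContinuousOn (fun z => G z a) (closure D.Ω \ {a}) ∧
    HarmOn (fun z => G z a) (D.Ω \ {a}) ∧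
    (∀ z ∈ frontier D.Ω, G z a = 0) ∧
    ∃ U : Set ℂ, IsOpen U ∧ a ∈ U ∧ ∃ u : ℂ → ℝ, HarmOn u U ∧
      ∀ z ∈ U \ {a}, G z a = -Real.log (dist z a) + u z

/-- meromorphic functions on `Ω`, continuous up to `∂Ω` away from the (finitely many)
poles, which extend meromorphically to the double `Ω̂` of `Ω`: there is a meromorphic
function `h` on `Ω` (continuous up to `∂Ω` off its poles) with `g = conj h` on `∂Ω`. -/
def DoubleMero (g : ℂ → ℂ) : Prop :=
  MeromorphicOn g D.Ω ∧
  (∃ P : Set ℂ, P ⊆ D.Ω ∧ P.Finite ∧ ContinuousOn g (closure D.Ω \ P)) ∧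
  ∃ h : ℂ → ℂ, MeromorphicOn h D.Ω ∧
    (∃ Q : Set ℂ, Q ⊆ D.Ω ∧ Q.Finite ∧ ContinuousOn h (closure D.Ω \ Q)) ∧
    ∀ z ∈ frontier D.Ω, g z = (starRingEnd ℂ) (h z)

/-- the generating set of the class `𝓐`: the functions `F_j'`; `G_z(·,a)`;
`∂ⁿ/∂aⁿ G_z(·,a)` and `∂ⁿ/∂āⁿ G_z(·,a)` for `a ∈ cl Ω`; and products of two Szegő
kernels `S(·,a₁)S(·,a₂)`.  The class `𝓐` is its complex linear span. -/
def classABase (S : ℂ → ℂ → ℂ) (G : ℂ → ℂ → ℝ) (ω : Fin n → ℂ → ℝ) : Set (ℂ → ℂ) :=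
  (Set.range fun j : Fin (n - 1) => Fp (ω (Fin.castLE (Nat.sub_le n 1) j))) ∪
  {g | ∃ a ∈ closure D.Ω, g = fun z => wdz (fun w => ((G w a : ℝ) : ℂ)) z} ∪
  {g | ∃ a ∈ closure D.Ω, ∃ m : ℕ, 1 ≤ m ∧
    g = fun z => (wdz^[m] fun w => wdz (fun ξ => ((G ξ w : ℝ) : ℂ)) z) a} ∪
  {g | ∃ a ∈ closure D.Ω, ∃ m : ℕ, 1 ≤ m ∧
    g = fun z => (wdzbar^[m] fun w => wdz (fun ξ => ((G ξ w : ℝ) : ℂ)) z) a} ∪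
  {g | ∃ a₁ ∈ D.Ω, ∃ a₂ ∈ D.Ω, g = fun z => S z a₁ * S z a₂}

/-- `Kt` is the reduced Bergman kernel `K̃_Ω(z,ζ) = ∂_z M(z,ζ,Ω)` of `Ω`. -/
def IsReducedBergman (Kt : ℂ → ℂ → ℂ) : Prop :=
  ∀ ζ ∈ D.Ω, ∃ M : ℂ → ℂ,
    DifferentiableOn ℂ M D.Ω ∧ M ζ = 0 ∧
    IntegrableOn (fun z => ‖deriv M z‖ ^ 2) D.Ω volume ∧
    (∀ z ∈ D.Ω, Kt z ζ = deriv M z) ∧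
    ∀ f : ℂ → ℂ, DifferentiableOn ℂ f D.Ω → f ζ = 0 →
      IntegrableOn (fun z => ‖deriv f z‖ ^ 2) D.Ω volume →
      deriv f ζ = ∫ z in D.Ω, deriv f z * (starRingEnd ℂ) (deriv M z)

/-- `Kt m` is the `m`-th order reduced Bergman kernel `K̃_{Ω,m}(z,ζ) = ∂_z M(z,ζ^m,Ω)`. -/
def IsHigherReducedBergman (Kt : ℕ → ℂ → ℂ → ℂ) : Prop :=
  ∀ m : ℕ, 1 ≤ m → ∀ ζ ∈ D.Ω, ∃ M : ℂ → ℂ,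
    DifferentiableOn ℂ M D.Ω ∧ (∀ j, j < m → iteratedDeriv j M ζ = 0) ∧
    IntegrableOn (fun z => ‖deriv M z‖ ^ 2) D.Ω volume ∧
    (∀ z ∈ D.Ω, Kt m z ζ = deriv M z) ∧
    ∀ f : ℂ → ℂ, DifferentiableOn ℂ f D.Ω → (∀ j, j < m → iteratedDeriv j f ζ = 0) →
      IntegrableOn (fun z => ‖deriv f z‖ ^ 2) D.Ω volume →
      iteratedDeriv m f ζ = ∫ z in D.Ω, deriv f z * (starRingEnd ℂ) (deriv M z)

end SmoothDomain

/-!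
Fix a compact set of pairs `(a, b)` in `Ω × Ω`, write `S_b = S_φ(·, b)` and
`d = S_{φ_k}(·, b) - S_b`. Testing both reproducing properties against `S_{φ_k}(·, b)` and `S_b`
gives `⟨d, S_{φ_k}(·, b)⟩_{φ_k} = S_{φ_k}(b, b) - S_φ(b, b) = ⟨d, S_b⟩_φ`, hence
`‖d‖²_{φ_k} = ∫ d S̄_b (φ - φ_k) ds`. Once `φ_k ≥ (inf φ)/2`, Cauchy–Schwarz gives
`‖d‖_{L²} ≤ 2 sup|φ - φ_k| ‖S_b‖_{L²} / inf φ`, and then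
`|S_{φ_k}(a, b) - S_φ(a, b)| = |⟨d, S_a⟩_φ| ≤ sup φ ‖d‖_{L²} ‖S_a‖_{L²}`.
It remains to bound `‖S_a‖_{L²}` for `a` in a compact subset of `Ω`: `(inf φ) ‖S_a‖²_{L²}` is at most
`‖S_a‖²_φ = S_φ(a, a)`, which is the Cauchy integral of `S_a`, hence at most
`‖S_a‖_{L¹} / (2π dist(a, ∂Ω)) ≤ ‖S_a‖_{L²} √|∂Ω| / (2π dist(a, ∂Ω))`.
-/

open ComplexConjugate Real

section WeightedL2

variable {α : Type*} [MeasurableSpace α] {μ : Measure α}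

theorem integral_norm_mul_norm_le_sqrt_mul_sqrt {E F : Type*} [NormedAddCommGroup E]
    [NormedAddCommGroup F] {f : α → E} {g : α → F} (hf : MemLp f 2 μ) (hg : MemLp g 2 μ) :
    ∫ x, ‖f x‖ * ‖g x‖ ∂μ ≤ √(∫ x, ‖f x‖ ^ 2 ∂μ) * √(∫ x, ‖g x‖ ^ 2 ∂μ) := by
  have h := integral_mul_norm_le_Lp_mul_Lq Real.HolderConjugate.two_two
    (by simpa using hf.norm) (by simpa using hg.norm)
  simp only [norm_norm, Real.rpow_two] at h
  rwa [Real.sqrt_eq_rpow, Real.sqrt_eq_rpow]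

theorem integral_norm_le_sqrt_mul_sqrt [IsFiniteMeasure μ] {E : Type*} [NormedAddCommGroup E]
    {f : α → E} (hf : MemLp f 2 μ) :
    ∫ x, ‖f x‖ ∂μ ≤ √(∫ x, ‖f x‖ ^ 2 ∂μ) * √(μ.real univ) := by
  simpa using integral_norm_mul_norm_le_sqrt_mul_sqrt hf (memLp_const (1 : ℝ) : MemLp _ 2 μ)

theorem MeasureTheory.MemLp.integrable_mul_conj_mul {u v : α → ℂ} {w : α → ℝ} {C : ℝ}
    (hu : MemLp u 2 μ) (hv : MemLp v 2 μ) (hw : AEStronglyMeasurable w μ)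
    (hwC : ∀ᵐ x ∂μ, |w x| ≤ C) :
    Integrable (fun x => u x * conj (v x) * w x) μ :=
  (hu.integrable_mul hv.star).mul_bdd (continuous_ofReal.comp_aestronglyMeasurable hw)
    (hwC.mono fun x hx => by rwa [norm_real, Real.norm_eq_abs])

theorem norm_integral_mul_conj_mul_le {u v : α → ℂ} {w : α → ℝ} {C : ℝ}
    (hu : MemLp u 2 μ) (hv : MemLp v 2 μ) (hwC : ∀ᵐ x ∂μ, |w x| ≤ C) :
    ‖∫ x, u x * conj (v x) * w x ∂μ‖
      ≤ C * (√(∫ x, ‖u x‖ ^ 2 ∂μ) * √(∫ x, ‖v x‖ ^ 2 ∂μ)) := by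
  rcases eq_zero_or_neZero μ with rfl | hμ
  · simp
  have hC : 0 ≤ C := hwC.exists.elim fun x hx => (abs_nonneg _).trans hx
  calc ‖∫ x, u x * conj (v x) * w x ∂μ‖ ≤ ∫ x, C * (‖u x‖ * ‖v x‖) ∂μ := by
        refine norm_integral_le_of_norm_le ((hu.norm.integrable_mul hv.norm).const_mul C) ?_
        filter_upwards [hwC] with x hx
        rw [norm_mul, norm_mul, RCLike.norm_conj, norm_real, Real.norm_eq_abs, mul_comm]
        exact mul_le_mul_of_nonneg_right hx (by positivity)
    _ = C * ∫ x, ‖u x‖ * ‖v x‖ ∂μ := integral_const_mul _ _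
    _ ≤ _ := mul_le_mul_of_nonneg_left (integral_norm_mul_norm_le_sqrt_mul_sqrt hu hv) hC

theorem integral_mul_conj_self_mul (u : α → ℂ) (w : α → ℝ) :
    ∫ x, u x * conj (u x) * w x ∂μ = ((∫ x, ‖u x‖ ^ 2 * w x ∂μ : ℝ) : ℂ) := by
  rw [← integral_complex_ofReal]
  congr 1 with x
  rw [mul_conj, normSq_eq_norm_sq]
  push_cast
  ring

end WeightedL2

theorem Metric.tendstoUniformlyOn_of_forall_eventually_dist_le {ι α β : Type*}
    [PseudoMetricSpace β] {F : ι → α → β} {f : α → β} {l : Filter ι} {s : Set α} (A : ℝ)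
    (h : ∀ η > 0, ∀ᶠ i in l, ∀ x ∈ s, dist (f x) (F i x) ≤ A * η) :
    TendstoUniformlyOn F f l s := by
  refine Metric.tendstoUniformlyOn_iff.2 fun ε hε => ?_
  have hA : 0 < |A| + 1 := by positivity
  filter_upwards [h (ε / (|A| + 1)) (by positivity)] with i hi x hx
  calc dist (f x) (F i x) ≤ A * (ε / (|A| + 1)) := hi x hx
    _ ≤ |A| * (ε / (|A| + 1)) := by gcongr; exact le_abs_self A
    _ < ε := by rw [mul_div_assoc', div_lt_iff₀ hA]; nlinarith [abs_nonneg A]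

namespace SmoothDomain

variable {n : ℕ} (D : SmoothDomain n)

theorem ae_mem_frontier : ∀ᵐ z ∂D.μ, z ∈ frontier D.Ω := by
  change D.μ (frontier D.Ω)ᶜ = 0
  rw [D.μ_def, Measure.finsetSum_apply]
  refine Finset.sum_eq_zero fun i _ => ?_
  rw [Measure.map_apply (D.γ_smooth i).continuous.measurable measurableSet_frontier.compl]
  convert measure_empty (μ := (volume.restrict (Ico (0 : ℝ) 1)).withDensity _)
  refine eq_empty_of_forall_notMem fun t ht => ht ?_
  rw [D.γ_cover]
  exact mem_iUnion.2 ⟨i, mem_range_self t⟩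

instance isFiniteMeasure_μ : IsFiniteMeasure D.μ := by
  rw [D.μ_def]
  have (i : Fin n) : IsFiniteMeasure ((volume.restrict (Ico (0 : ℝ) 1)).withDensity
      fun t => ENNReal.ofReal ‖deriv (D.γ i) t‖) :=
    isFiniteMeasure_withDensity_ofReal <|
      ((((D.γ_smooth i).continuous_deriv (by simp)).norm.integrableOn_Icc).mono_set
        Ico_subset_Icc_self).hasFiniteIntegral
  infer_instance

theorem frontier_nonempty : (frontier D.Ω).Nonempty :=
  nonempty_frontier_iff.2
    ⟨D.connected.nonempty, fun h => NormedSpace.unbounded_univ ℝ ℂ (h ▸ D.bounded)⟩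

theorem isCompact_frontier : IsCompact (frontier D.Ω) :=
  Metric.isCompact_of_isClosed_isBounded isClosed_frontier
    (D.bounded.closure.subset frontier_subset_closure)

theorem norm_T {z : ℂ} (hz : z ∈ frontier D.Ω) : ‖D.T z‖ = 1 := by
  rw [D.γ_cover] at hz
  obtain ⟨i, t, rfl⟩ := mem_iUnion.1 hz
  rw [D.T_def, norm_div, norm_real, norm_norm, div_self (norm_ne_zero_iff.2 (D.γ_regular i t))]

theorem norm_cauchy_le {u : ℂ → ℂ} {a : ℂ} {δ : ℝ} (hu : Integrable u D.μ) (hδ : 0 < δ)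
    (hδa : ∀ ζ ∈ frontier D.Ω, δ ≤ dist ζ a) :
    ‖D.cauchy u a‖ ≤ (2 * π * δ)⁻¹ * ∫ ζ, ‖u ζ‖ ∂D.μ := by
  have hint : ‖∫ ζ, u ζ * D.T ζ / (ζ - a) ∂D.μ‖ ≤ ∫ ζ, δ⁻¹ * ‖u ζ‖ ∂D.μ := by
    refine norm_integral_le_of_norm_le (hu.norm.const_mul _) ?_
    filter_upwards [D.ae_mem_frontier] with ζ hζ
    rw [norm_div, norm_mul, D.norm_T hζ, mul_one, div_eq_inv_mul, ← dist_eq_norm]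
    gcongr
    exact hδa ζ hζ
  rw [cauchy, norm_mul, integral_const_mul] at *
  calc ‖(2 * (π : ℂ) * I)⁻¹‖ * ‖∫ ζ, u ζ * D.T ζ / (ζ - a) ∂D.μ‖
      ≤ (2 * π)⁻¹ * (δ⁻¹ * ∫ ζ, ‖u ζ‖ ∂D.μ) := by
        gcongr
        simp [abs_of_pos pi_pos]
    _ = _ := by rw [mul_inv (2 * π), mul_assoc]

variable {D}

theorem SmoothWeight.aestronglyMeasurable {w : ℂ → ℝ} (hw : D.SmoothWeight w) :
    AEStronglyMeasurable w D.μ := by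
  obtain ⟨-, W, hW, hwW⟩ := hw
  exact hW.continuous.aestronglyMeasurable.congr
    (D.ae_mem_frontier.mono fun z hz => (hwW hz).symm)

theorem SmoothWeight.exists_pos_bounds {w : ℂ → ℝ} (hw : D.SmoothWeight w) :
    ∃ c C, 0 < c ∧ c ≤ C ∧ ∀ z ∈ frontier D.Ω, c ≤ w z ∧ w z ≤ C := by
  obtain ⟨hpos, W, hW, hwW⟩ := hw
  obtain ⟨z₀, hz₀, hmin⟩ :=
    D.isCompact_frontier.exists_isMinOn D.frontier_nonempty hW.continuous.continuousOn
  obtain ⟨z₁, hz₁, hmax⟩ :=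
    D.isCompact_frontier.exists_isMaxOn D.frontier_nonempty hW.continuous.continuousOn
  refine ⟨w z₀, w z₁, hpos z₀ hz₀, ?_, fun z hz => ?_⟩
  · rw [hwW hz₀, hwW hz₁]
    exact hmin hz₁
  · rw [hwW hz₀, hwW hz₁, hwW hz]
    exact ⟨hmin hz, hmax hz⟩

theorem SmoothWeight.exists_ae_abs_le {w : ℂ → ℝ} (hw : D.SmoothWeight w) :
    ∃ C, ∀ᵐ z ∂D.μ, |w z| ≤ C := by
  obtain ⟨c, C, hc, -, hcC⟩ := hw.exists_pos_bounds
  refine ⟨C, D.ae_mem_frontier.mono fun z hz => ?_⟩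
  obtain ⟨hcz, hzC⟩ := hcC z hz
  exact abs_le.2 ⟨by linarith, hzC⟩

theorem SmoothWeight.integrable_mul_conj_mul {w : ℂ → ℝ} {u v : ℂ → ℂ} (hw : D.SmoothWeight w)
    (hu : MemLp u 2 D.μ) (hv : MemLp v 2 D.μ) :
    Integrable (fun z => u z * conj (v z) * w z) D.μ :=
  have ⟨_, hwC⟩ := hw.exists_ae_abs_le
  hu.integrable_mul_conj_mul hv hw.aestronglyMeasurable hwC

theorem SmoothWeight.ip_sub_left {w : ℂ → ℝ} {u₁ u₂ v : ℂ → ℂ} (hw : D.SmoothWeight w)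
    (hu₁ : MemLp u₁ 2 D.μ) (hu₂ : MemLp u₂ 2 D.μ) (hv : MemLp v 2 D.μ) :
    D.ip w (fun z => u₁ z - u₂ z) v = D.ip w u₁ v - D.ip w u₂ v := by
  rw [ip, ip, ip, ← integral_sub (hw.integrable_mul_conj_mul hu₁ hv)
    (hw.integrable_mul_conj_mul hu₂ hv)]
  congr 1 with z
  ring

theorem SmoothWeight.ip_sub_right {w : ℂ → ℝ} {u v₁ v₂ : ℂ → ℂ} (hw : D.SmoothWeight w)
    (hu : MemLp u 2 D.μ) (hv₁ : MemLp v₁ 2 D.μ) (hv₂ : MemLp v₂ 2 D.μ) :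
    D.ip w u (fun z => v₁ z - v₂ z) = D.ip w u v₁ - D.ip w u v₂ := by
  rw [ip, ip, ip, ← integral_sub (hw.integrable_mul_conj_mul hu hv₁)
    (hw.integrable_mul_conj_mul hu hv₂)]
  congr 1 with z
  rw [map_sub]
  ring

theorem SmoothWeight.mul_integral_norm_sq_le_norm_ip_self {w : ℂ → ℝ} {u : ℂ → ℂ} {c : ℝ}
    (hw : D.SmoothWeight w) (hu : MemLp u 2 D.μ) (hcw : ∀ z ∈ frontier D.Ω, c ≤ w z) :
    c * ∫ z, ‖u z‖ ^ 2 ∂D.μ ≤ ‖D.ip w u u‖ := by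
  obtain ⟨C, hwC⟩ := hw.exists_ae_abs_le
  have huw : Integrable (fun z => ‖u z‖ ^ 2 * w z) D.μ :=
    hu.norm.integrable_sq.mul_bdd hw.aestronglyMeasurable (hwC.mono fun z hz => hz)
  rw [ip, integral_mul_conj_self_mul, norm_real, Real.norm_eq_abs, ← integral_const_mul]
  refine (integral_mono_ae (hu.norm.integrable_sq.const_mul c) huw ?_).trans (le_abs_self _)
  filter_upwards [D.ae_mem_frontier] with z hz
  rw [mul_comm]
  exact mul_le_mul_of_nonneg_left (hcw z hz) (sq_nonneg _)

theorem norm_ip_le {w : ℂ → ℝ} {u v : ℂ → ℂ} {C : ℝ} (hu : MemLp u 2 D.μ) (hv : MemLp v 2 D.μ)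
    (hwC : ∀ z ∈ frontier D.Ω, |w z| ≤ C) :
    ‖D.ip w u v‖ ≤ C * (√(∫ z, ‖u z‖ ^ 2 ∂D.μ) * √(∫ z, ‖v z‖ ^ 2 ∂D.μ)) :=
  norm_integral_mul_conj_mul_le hu hv (D.ae_mem_frontier.mono hwC)

end SmoothDomain

namespace SmoothDomain.IsSzegoKernel

variable {n : ℕ} {D : SmoothDomain n} {φ ψ : ℂ → ℝ} {S S' : ℂ → ℂ → ℂ} {a b : ℂ}

theorem memLp (hS : D.IsSzegoKernel φ S) (ha : a ∈ D.Ω) : MemLp (fun z => S z a) 2 D.μ :=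
  (hS a ha).1.1

theorem mul_sqrt_integral_le_of_le_dist (hS : D.IsSzegoKernel φ S) (hφ : D.SmoothWeight φ)
    (ha : a ∈ D.Ω) {c δ : ℝ} (hδ : 0 < δ) (hδa : ∀ ζ ∈ frontier D.Ω, δ ≤ dist ζ a)
    (hcφ : ∀ z ∈ frontier D.Ω, c ≤ φ z) :
    c * (2 * π * δ) * √(∫ z, ‖S z a‖ ^ 2 ∂D.μ) ≤ √(D.μ.real univ) := by
  set N := √(∫ z, ‖S z a‖ ^ 2 ∂D.μ)
  have hdiag : c * N ^ 2 ≤ ‖S a a‖ := by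
    rw [Real.sq_sqrt (integral_nonneg fun _ => sq_nonneg _), (hS a ha).2 _ (hS a ha).1]
    exact hφ.mul_integral_norm_sq_le_norm_ip_self (hS.memLp ha) hcφ
  have hcauchy : ‖S a a‖ ≤ (2 * π * δ)⁻¹ * (N * √(D.μ.real univ)) := by
    rw [show S a a = D.cauchy (fun z => S z a) a from (hS a ha).1.2.2.1 a ha]
    refine (D.norm_cauchy_le ((hS.memLp ha).integrable one_le_two) hδ hδa).trans ?_
    gcongr
    exact integral_norm_le_sqrt_mul_sqrt (hS.memLp ha)
  rcases (Real.sqrt_nonneg _ : 0 ≤ N).eq_or_lt with hN | hN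
  · rw [show N = 0 from hN.symm, mul_zero]
    exact Real.sqrt_nonneg _
  · have := (le_inv_mul_iff₀ (by positivity)).1 (hdiag.trans hcauchy)
    refine le_of_mul_le_mul_right ?_ hN
    linarith

theorem exists_sqrt_integral_le_of_isCompact (hS : D.IsSzegoKernel φ S)
    (hφ : D.SmoothWeight φ) {K : Set ℂ} (hK : IsCompact K) (hKΩ : K ⊆ D.Ω) :
    ∃ M, ∀ a ∈ K, √(∫ z, ‖S z a‖ ^ 2 ∂D.μ) ≤ M := by
  obtain ⟨c, _, hc, _, hcφ⟩ := hφ.exists_pos_bounds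
  obtain ⟨δ, hδ, hδK⟩ := hK.exists_thickening_subset_open D.isOpen hKΩ
  refine ⟨√(D.μ.real univ) / (c * (2 * π * δ)), fun a ha => ?_⟩
  rw [le_div_iff₀' (by positivity)]
  refine hS.mul_sqrt_integral_le_of_le_dist hφ (hKΩ ha) hδ (fun ζ hζ => ?_)
    fun z hz => (hcφ z hz).1
  by_contra! h
  exact (D.isOpen.frontier_eq ▸ hζ).2 (hδK (Metric.mem_thickening_iff.2 ⟨a, ha, h⟩))

theorem sub_apply_eq_ip (hS : D.IsSzegoKernel φ S) (hS' : D.IsSzegoKernel ψ S')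
    (hφ : D.SmoothWeight φ) (ha : a ∈ D.Ω) (hb : b ∈ D.Ω) :
    S' a b - S a b = D.ip φ (fun z => S' z b - S z b) (fun z => S z a) := by
  rw [hφ.ip_sub_left (hS'.memLp hb) (hS.memLp hb) (hS.memLp ha), ← (hS a ha).2 _ (hS' b hb).1,
    ← (hS a ha).2 _ (hS b hb).1]

theorem ip_sub_self_eq (hS : D.IsSzegoKernel φ S) (hS' : D.IsSzegoKernel ψ S')
    (hφ : D.SmoothWeight φ) (hψ : D.SmoothWeight ψ) (hb : b ∈ D.Ω) :
    D.ip ψ (fun z => S' z b - S z b) (fun z => S' z b - S z b)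
      = D.ip (fun z => φ z - ψ z) (fun z => S' z b - S z b) (fun z => S z b) := by
  have hd : MemLp (fun z => S' z b - S z b) 2 D.μ := (hS'.memLp hb).sub (hS.memLp hb)
  -- both sides of `h` equal `S' b b - S b b`
  have h : D.ip ψ (fun z => S' z b - S z b) (fun z => S' z b)
      = D.ip φ (fun z => S' z b - S z b) (fun z => S z b) := by
    rw [hψ.ip_sub_left (hS'.memLp hb) (hS.memLp hb) (hS'.memLp hb),
      hφ.ip_sub_left (hS'.memLp hb) (hS.memLp hb) (hS.memLp hb),
      ← (hS' b hb).2 _ (hS' b hb).1, ← (hS' b hb).2 _ (hS b hb).1,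
      ← (hS b hb).2 _ (hS' b hb).1, ← (hS b hb).2 _ (hS b hb).1]
  rw [hψ.ip_sub_right hd (hS'.memLp hb) (hS.memLp hb), h, ip, ip, ip,
    ← integral_sub (hφ.integrable_mul_conj_mul hd (hS.memLp hb))
      (hψ.integrable_mul_conj_mul hd (hS.memLp hb))]
  congr 1 with z
  push_cast
  ring

theorem mul_sqrt_integral_sub_le (hS : D.IsSzegoKernel φ S) (hS' : D.IsSzegoKernel ψ S')
    (hφ : D.SmoothWeight φ) (hψ : D.SmoothWeight ψ) (hb : b ∈ D.Ω) {c ε : ℝ}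
    (hcψ : ∀ z ∈ frontier D.Ω, c ≤ ψ z) (hε : ∀ z ∈ frontier D.Ω, |φ z - ψ z| ≤ ε) :
    c * √(∫ z, ‖S' z b - S z b‖ ^ 2 ∂D.μ) ≤ ε * √(∫ z, ‖S z b‖ ^ 2 ∂D.μ) := by
  set N := √(∫ z, ‖S' z b - S z b‖ ^ 2 ∂D.μ)
  have hd : MemLp (fun z => S' z b - S z b) 2 D.μ := (hS'.memLp hb).sub (hS.memLp hb)
  have h : c * N ^ 2 ≤ ε * (N * √(∫ z, ‖S z b‖ ^ 2 ∂D.μ)) := by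
    rw [Real.sq_sqrt (integral_nonneg fun _ => sq_nonneg _)]
    calc c * ∫ z, ‖S' z b - S z b‖ ^ 2 ∂D.μ
        ≤ ‖D.ip ψ (fun z => S' z b - S z b) (fun z => S' z b - S z b)‖ :=
          hψ.mul_integral_norm_sq_le_norm_ip_self hd hcψ
      _ = ‖D.ip (fun z => φ z - ψ z) (fun z => S' z b - S z b) (fun z => S z b)‖ := by
          rw [hS.ip_sub_self_eq hS' hφ hψ hb]
      _ ≤ ε * (N * √(∫ z, ‖S z b‖ ^ 2 ∂D.μ)) := D.norm_ip_le hd (hS.memLp hb) hε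
  rcases (Real.sqrt_nonneg _ : 0 ≤ N).eq_or_lt with hN | hN
  · obtain ⟨z, hz⟩ := D.frontier_nonempty
    rw [show N = 0 from hN.symm, mul_zero]
    exact mul_nonneg ((abs_nonneg _).trans (hε z hz)) (Real.sqrt_nonneg _)
  · refine le_of_mul_le_mul_right ?_ hN
    linarith

theorem norm_sub_le (hS : D.IsSzegoKernel φ S) (hS' : D.IsSzegoKernel ψ S')
    (hφ : D.SmoothWeight φ) (hψ : D.SmoothWeight ψ) (ha : a ∈ D.Ω) (hb : b ∈ D.Ω)
    {c C ε : ℝ} (hc : 0 < c) (hcψ : ∀ z ∈ frontier D.Ω, c ≤ ψ z)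
    (hφC : ∀ z ∈ frontier D.Ω, φ z ≤ C) (hε : ∀ z ∈ frontier D.Ω, |φ z - ψ z| ≤ ε) :
    ‖S' a b - S a b‖
      ≤ C / c * (√(∫ z, ‖S z a‖ ^ 2 ∂D.μ) * √(∫ z, ‖S z b‖ ^ 2 ∂D.μ)) * ε := by
  have hd : MemLp (fun z => S' z b - S z b) 2 D.μ := (hS'.memLp hb).sub (hS.memLp hb)
  have hC : 0 ≤ C := by
    obtain ⟨z, hz⟩ := D.frontier_nonempty
    exact (hφ.1 z hz).le.trans (hφC z hz)
  have hdiff := hS.mul_sqrt_integral_sub_le hS' hφ hψ hb hcψ hε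
  rw [hS.sub_apply_eq_ip hS' hφ ha hb]
  calc ‖D.ip φ (fun z => S' z b - S z b) (fun z => S z a)‖
      ≤ C * (√(∫ z, ‖S' z b - S z b‖ ^ 2 ∂D.μ) * √(∫ z, ‖S z a‖ ^ 2 ∂D.μ)) :=
        D.norm_ip_le hd (hS.memLp ha) fun z hz =>
          abs_le.2 ⟨by linarith [hφ.1 z hz, hφC z hz], hφC z hz⟩
    _ ≤ C * (ε / c * √(∫ z, ‖S z b‖ ^ 2 ∂D.μ) * √(∫ z, ‖S z a‖ ^ 2 ∂D.μ)) := by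
        gcongr
        rw [div_mul_eq_mul_div, le_div_iff₀ hc]
        linarith
    _ = _ := by ring

end SmoothDomain.IsSzegoKernel

/-- **Ramadanov-type theorem, uniform convergence of the weights.**
If `φ_k → φ` uniformly on `∂Ω`, then `S_{φ_k}(z,w) → S_φ(z,w)` locally uniformly
on `Ω × Ω`. -/
theorem weighted_szego_kernel_convergence_interior {n : ℕ} (D : SmoothDomain n)
    (φ : ℂ → ℝ) (hφ : D.SmoothWeight φ)
    (φk : ℕ → ℂ → ℝ) (hφk : ∀ k, D.SmoothWeight (φk k))
    (hconv : TendstoUniformlyOn (fun k => φk k) φ atTop (frontier D.Ω))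
    (Sk : ℕ → ℂ → ℂ → ℂ) (hSk : ∀ k, D.IsSzegoKernel (φk k) (Sk k))
    (S : ℂ → ℂ → ℂ) (hS : D.IsSzegoKernel φ S) :
    TendstoLocallyUniformlyOn (fun k (p : ℂ × ℂ) => Sk k p.1 p.2)
      (fun p => S p.1 p.2) atTop (D.Ω ×ˢ D.Ω) := by
  obtain ⟨c, C, hc, hcC, hφcC⟩ := hφ.exists_pos_bounds
  rw [tendstoLocallyUniformlyOn_iff_forall_isCompact (D.isOpen.prod D.isOpen)]
  intro K hKΩ hK
  obtain ⟨M, hM⟩ := hS.exists_sqrt_integral_le_of_isCompact hφ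
    ((hK.image continuous_fst).union (hK.image continuous_snd))
    (union_subset (image_subset_iff.2 fun p hp => (hKΩ hp).1)
      (image_subset_iff.2 fun p hp => (hKΩ hp).2))
  refine Metric.tendstoUniformlyOn_of_forall_eventually_dist_le (C / (c / 2) * (M * M))
    fun η hη => ?_
  filter_upwards [Metric.tendstoUniformlyOn_iff.1 hconv _ (lt_min hη (half_pos hc))]
    with k hk ⟨a, b⟩ hab
  have hε : ∀ z ∈ frontier D.Ω, |φ z - φk k z| ≤ min η (c / 2) := fun z hz =>
    (Real.dist_eq _ _ ▸ hk z hz).le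
  have hcφk : ∀ z ∈ frontier D.Ω, c / 2 ≤ φk k z := fun z hz => by
    linarith [(abs_le.1 (hε z hz)).2, (hφcC z hz).1, min_le_right η (c / 2)]
  rw [dist_comm, dist_eq_norm]
  calc ‖Sk k a b - S a b‖
      ≤ C / (c / 2) * (√(∫ z, ‖S z a‖ ^ 2 ∂D.μ) * √(∫ z, ‖S z b‖ ^ 2 ∂D.μ)) * min η (c / 2) :=
        hS.norm_sub_le (hSk k) hφ (hφk k) (hKΩ hab).1 (hKΩ hab).2 (half_pos hc) hcφk
          (fun z hz => (hφcC z hz).2) hε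
    _ ≤ C / (c / 2) * (M * M) * η := by
        have hMa := hM a (Or.inl ⟨_, hab, rfl⟩)
        have hMb := hM b (Or.inr ⟨_, hab, rfl⟩)
        have hM0 := (Real.sqrt_nonneg _).trans hMa
        have hC : 0 ≤ C / (c / 2) := div_nonneg (hc.le.trans hcC) (half_pos hc).le
        gcongr
        exact min_le_left _ _
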